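/- arXiv:2511.01605 — 3 statements merged into one kernel-verified Lean document; each statement's English description precedes it below -/
import Mathlib

section
/- Let P, K be positive integers, let v_1, …, v_K ∈ ℂ^P, and let a ∈ ℝ^K be such that the true covariance C = Σ_{k=1}^K a_k v_k v_k^H is Hermitian positive definite. Let â ∈ ℝ^K be such that Ĉ = Σ_{k=1}^K â_k v_k v_k^H is Hermitian positive definite and â is a stationary point of the population negative log-likelihood, i.e. v_k^H Ĉ^{-1} (Ĉ − C) Ĉ^{-1} v_k = 0 for every k = 1, …, K. Then Ĉ = C. -/
/-!
Write `M = Ĉ - C = ∑ₖ (âₖ - aₖ) vₖ vₖᴴ`. Weighting the stationarity equations by `âₖ - aₖ` and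
summing gives `tr (Ĉ⁻¹ M Ĉ⁻¹ M) = 0`. Factoring `Ĉ⁻¹ = Sᴴ S` with `S` invertible, this trace is
`tr (Nᴴ N)` for the Hermitian matrix `N = S M Sᴴ`, so `N = 0` and hence `M = 0`.
-/

open Matrix
open scoped ComplexOrder

/-- The rank-one Hermitian matrix `v vᴴ` formed from a vector `v ∈ ℂ^P`. -/
noncomputable def outer {P : ℕ} (v : Fin P → ℂ) : Matrix (Fin P) (Fin P) ℂ :=
  Matrix.of fun p q => v p * star (v q)

theorem Matrix.PosDef.exists_isUnit_eq_conjTranspose_mul_self {𝕜 n : Type*} [RCLike 𝕜]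
    [Fintype n] [DecidableEq n] {B : Matrix n n 𝕜} (hB : B.PosDef) :
    ∃ S : Matrix n n 𝕜, IsUnit S ∧ B = Sᴴ * S := by
  open scoped MatrixOrder Matrix.Norms.L2Operator in
  exact CStarAlgebra.isStrictlyPositive_iff_eq_star_mul_self.mp hB.isStrictlyPositive

theorem Matrix.IsHermitian.eq_zero_of_trace_mul_mul_mul_eq_zero {𝕜 n : Type*} [RCLike 𝕜]
    [Fintype n] [DecidableEq n] {B M : Matrix n n 𝕜} (hB : B.PosDef) (hM : M.IsHermitian)
    (h : (B * M * B * M).trace = 0) : M = 0 := by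
  obtain ⟨S, hS, rfl⟩ := hB.exists_isUnit_eq_conjTranspose_mul_self
  have hN : (S * M * Sᴴ)ᴴ * (S * M * Sᴴ) = S * (M * (Sᴴ * S) * M) * Sᴴ := by
    simp only [conjTranspose_mul, conjTranspose_conjTranspose, hM.eq, Matrix.mul_assoc]
  have hN0 : S * M * Sᴴ = 0 := by
    rw [← trace_conjTranspose_mul_self_eq_zero_iff, hN, trace_mul_cycle, ← h]
    simp only [Matrix.mul_assoc]
  have hSH : IsUnit Sᴴ := hS.star
  rwa [hSH.mul_left_eq_zero, hS.mul_right_eq_zero] at hN0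

theorem trace_mul_outer {P : ℕ} (D : Matrix (Fin P) (Fin P) ℂ) (v : Fin P → ℂ) :
    (D * outer v).trace = star v ⬝ᵥ (D *ᵥ v) := by
  rw [show outer v = vecMulVec v (star v) from rfl, mul_vecMulVec, trace_vecMulVec,
    dotProduct_comm]

theorem stmt_0_general (P K : ℕ)
    (v : Fin K → Fin P → ℂ) (a : Fin K → ℝ)
    (C : Matrix (Fin P) (Fin P) ℂ)
    (hCdef : C = ∑ k, (a k : ℂ) • outer (v k))
    (hCpd : C.PosDef)
    (ahat : Fin K → ℝ)
    (Chat : Matrix (Fin P) (Fin P) ℂ)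
    (hChatdef : Chat = ∑ k, (ahat k : ℂ) • outer (v k))
    (hChatpd : Chat.PosDef)
    (hstat : ∀ k, star (v k) ⬝ᵥ ((Chat⁻¹ * (Chat - C) * Chat⁻¹) *ᵥ v k) = 0) :
    Chat = C := by
  have hdiff : Chat - C = ∑ k, ((ahat k : ℂ) - a k) • outer (v k) := by
    simp only [hChatdef, hCdef, sub_smul, Finset.sum_sub_distrib]
  set D := Chat⁻¹ * (Chat - C) * Chat⁻¹
  have htrace : (D * (Chat - C)).trace = 0 := by
    simp [hdiff, Matrix.mul_sum, trace_mul_outer, hstat]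
  exact sub_eq_zero.mp <|
    (hChatpd.1.sub hCpd.1).eq_zero_of_trace_mul_mul_mul_eq_zero hChatpd.inv htrace

/-- In the population setting `S = C`, any stationary point of the
negative log-likelihood with fixed frequencies recovers the true covariance. -/
theorem stmt_0 (P K : ℕ) (hP : 0 < P) (hK : 0 < K)
    (v : Fin K → Fin P → ℂ) (a : Fin K → ℝ)
    (C : Matrix (Fin P) (Fin P) ℂ)
    (hCdef : C = ∑ k, (a k : ℂ) • outer (v k))
    (hCpd : C.PosDef)
    (ahat : Fin K → ℝ)
    (Chat : Matrix (Fin P) (Fin P) ℂ)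
    (hChatdef : Chat = ∑ k, (ahat k : ℂ) • outer (v k))
    (hChatpd : Chat.PosDef)
    (hstat : ∀ k, star (v k) ⬝ᵥ ((Chat⁻¹ * (Chat - C) * Chat⁻¹) *ᵥ v k) = 0) :
    Chat = C :=
  stmt_0_general P K v a C hCdef hCpd ahat Chat hChatdef hChatpd hstat
end

section
/- Let P, K be positive integers, let v_1, …, v_K ∈ ℂ^P, let C be a P×P Hermitian positive definite complex matrix, and let Γ be a Hermitian matrix lying in the real span of {v_k v_k^H : k = 1, …, K}. If v_k^H C^{-1} Γ C^{-1} v_k = 0 for every k = 1, …, K, then Γ = 0. -/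
/-
Write `B = C⁻¹`. Since `Γ = ∑ cₖ vₖvₖᴴ`, the hypotheses give `tr (BΓBΓ) = ∑ cₖ vₖᴴ BΓB vₖ = 0`.
Factor the positive definite `B` as `S²` with `S` invertible and Hermitian; then
`tr (BΓBΓ) = tr (MᴴM)` for the Hermitian matrix `M = SΓS`, so `M = 0` and hence `Γ = 0`.
-/

open Matrix
open scoped ComplexOrder

lemma outer_eq_vecMulVec {P : ℕ} (w : Fin P → ℂ) : outer w = vecMulVec w (star w) := rfl

lemma trace_mul_sum_smul_outer {P K : ℕ} (A : Matrix (Fin P) (Fin P) ℂ)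
    (v : Fin K → Fin P → ℂ) (c : Fin K → ℂ) :
    (A * ∑ k, c k • outer (v k)).trace = ∑ k, c k * (star (v k) ⬝ᵥ (A *ᵥ v k)) := by
  simp only [Matrix.mul_sum, Matrix.mul_smul, trace_sum, trace_smul, outer_eq_vecMulVec,
    mul_vecMulVec, trace_vecMulVec, dotProduct_comm _ (star _), smul_eq_mul]

open scoped MatrixOrder in
theorem Matrix.eq_zero_of_trace_mul_mul_mul_self_eq_zero {𝕜 n : Type*} [RCLike 𝕜] [Fintype n]
    [DecidableEq n] {B Γ : Matrix n n 𝕜} (hB : B.PosDef) (hΓ : Γ.IsHermitian)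
    (h : (B * Γ * B * Γ).trace = 0) : Γ = 0 := by
  obtain ⟨S, hSunit, hSself, rfl⟩ :=
    CStarAlgebra.isStrictlyPositive_iff_exists_isUnit_and_isSelfAdjoint_and_eq_mul_self.mp
      hB.isStrictlyPositive
  have hM : (S * Γ * S)ᴴ = S * Γ * S := by
    rw [conjTranspose_mul, conjTranspose_mul, hSself.isHermitian.eq, hΓ.eq, Matrix.mul_assoc]
  have hMM : ((S * Γ * S)ᴴ * (S * Γ * S)).trace = 0 := by
    rw [hM, ← h, show S * Γ * S * (S * Γ * S) = S * (Γ * (S * S) * Γ * S) by noncomm_ring,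
      trace_mul_comm, show Γ * (S * S) * Γ * S * S = Γ * (S * S * Γ * (S * S)) by noncomm_ring,
      trace_mul_comm]
  have hSΓS : S * Γ * S = 0 := trace_conjTranspose_mul_self_eq_zero_iff.mp hMM
  rwa [hSunit.mul_left_eq_zero, hSunit.mul_right_eq_zero] at hSΓS

theorem stmt_2_general (P K : ℕ)
    (v : Fin K → Fin P → ℂ)
    (C : Matrix (Fin P) (Fin P) ℂ) (hCpd : C.PosDef)
    (Γ : Matrix (Fin P) (Fin P) ℂ) (hΓherm : Γ.IsHermitian)
    (hΓspan : ∃ c : Fin K → ℝ, Γ = ∑ k, (c k : ℂ) • outer (v k))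
    (horth : ∀ k, star (v k) ⬝ᵥ ((C⁻¹ * Γ * C⁻¹) *ᵥ v k) = 0) :
    Γ = 0 := by
  obtain ⟨c, hc⟩ := hΓspan
  refine eq_zero_of_trace_mul_mul_mul_self_eq_zero hCpd.inv hΓherm ?_
  have htrace := trace_mul_sum_smul_outer (C⁻¹ * Γ * C⁻¹) v (fun k => c k)
  rwa [← hc, Finset.sum_eq_zero fun k _ => by rw [horth k, mul_zero]] at htrace

/-- If a Hermitian matrix `Γ` in the real span of `{v_k v_kᴴ}`
is orthogonal to every `v_k v_kᴴ` in the `C⁻¹`-weighted inner product, then `Γ = 0`. -/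
theorem stmt_2 (P K : ℕ) (hP : 0 < P) (hK : 0 < K)
    (v : Fin K → Fin P → ℂ)
    (C : Matrix (Fin P) (Fin P) ℂ) (hCpd : C.PosDef)
    (Γ : Matrix (Fin P) (Fin P) ℂ) (hΓherm : Γ.IsHermitian)
    (hΓspan : ∃ c : Fin K → ℝ, Γ = ∑ k, (c k : ℂ) • outer (v k))
    (horth : ∀ k, star (v k) ⬝ᵥ ((C⁻¹ * Γ * C⁻¹) *ᵥ v k) = 0) :
    Γ = 0 :=
  stmt_2_general P K v C hCpd Γ hΓherm hΓspan horth
end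

section
/- Let P, K be positive integers, let v_1, …, v_K ∈ ℂ^P, let C be a P×P Hermitian positive definite complex matrix, let Δ be a P×P Hermitian matrix, and let Γ be a Hermitian matrix lying in the real span of {v_k v_k^H : k = 1, …, K}. If v_k^H C^{-1} (Γ − Δ) C^{-1} v_k = 0 for every k = 1, …, K, then ‖C^{-1/2} Γ C^{-1/2}‖_F ≤ ‖C^{-1/2} Δ C^{-1/2}‖_F. -/
/-!
With `S = C^{-1/2}`, `A = S Γ S` and `B = S Δ S`, the Frobenius inner product
`⟨A, A - B⟩ = tr (Γ C⁻¹ (Γ - Δ) C⁻¹)` expands, through `Γ = Σ c_k v_k v_kᴴ`, into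
`Σ c_k v_kᴴ C⁻¹ (Γ - Δ) C⁻¹ v_k = 0`. So `B = A - (A - B)` is an orthogonal decomposition and
`‖A‖_F ≤ ‖B‖_F` by Pythagoras.
-/

open Matrix
open scoped ComplexOrder

noncomputable def frobNorm {P : ℕ} (X : Matrix (Fin P) (Fin P) ℂ) : ℝ :=
  Real.sqrt (∑ p, ∑ q, ‖X p q‖ ^ 2)

noncomputable def Matrix.PosSemidef.sqrt {n 𝕜 : Type*} [Fintype n] [RCLike 𝕜] [DecidableEq n]
    {A : Matrix n n 𝕜} (hA : A.PosSemidef) : Matrix n n 𝕜 :=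
  hA.isHermitian.eigenvectorUnitary.1 * diagonal ((↑) ∘ (√·) ∘ hA.isHermitian.eigenvalues) *
    (star hA.isHermitian.eigenvectorUnitary : Matrix n n 𝕜)

namespace Matrix.PosSemidef

variable {n 𝕜 : Type*} [Fintype n] [RCLike 𝕜] [DecidableEq n] {A : Matrix n n 𝕜}

lemma sqrt_eq_cfc (hA : A.PosSemidef) : hA.sqrt = cfc Real.sqrt A := by
  rw [hA.isHermitian.cfc_eq, IsHermitian.cfc, Unitary.conjStarAlgAut_apply]
  rfl

lemma isHermitian_sqrt (hA : A.PosSemidef) : hA.sqrt.IsHermitian := by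
  rw [sqrt_eq_cfc]
  exact cfc_predicate _ _

lemma sqrt_mul_self (hA : A.PosSemidef) : hA.sqrt * hA.sqrt = A := by
  have : IsSelfAdjoint A := hA.isHermitian
  rw [sqrt_eq_cfc, ← cfc_mul .., cfc_congr (g := id), cfc_id ℝ A]
  intro x hx
  obtain ⟨i, rfl⟩ := hA.isHermitian.spectrum_real_eq_range_eigenvalues ▸ hx
  exact Real.mul_self_sqrt (hA.eigenvalues_nonneg i)

end Matrix.PosSemidef

theorem norm_le_norm_of_inner_sub_eq_zero {𝕜 E : Type*} [RCLike 𝕜] [NormedAddCommGroup E]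
    [InnerProductSpace 𝕜 E] {x y : E} (h : inner 𝕜 x (x - y) = 0) : ‖x‖ ≤ ‖y‖ := by
  have hxy : inner 𝕜 x (y - x) = 0 := by rw [← neg_sub, inner_neg_right, h, neg_zero]
  have hpyth := norm_add_sq_eq_norm_sq_add_norm_sq_of_inner_eq_zero x (y - x) hxy
  rw [add_sub_cancel] at hpyth
  refine (mul_self_le_mul_self_iff (norm_nonneg x) (norm_nonneg y)).mpr ?_
  rw [hpyth]
  exact le_add_of_nonneg_right (mul_self_nonneg _)

open WithLp in
theorem Matrix.inner_toLp_uncurry {m n 𝕜 : Type*} [Fintype m] [Fintype n] [RCLike 𝕜]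
    (X Y : Matrix m n 𝕜) :
    inner 𝕜 (toLp 2 (Function.uncurry X)) (toLp 2 (Function.uncurry Y)) = (Xᴴ * Y).trace := by
  simp only [PiLp.inner_apply, RCLike.inner_apply, Fintype.sum_prod_type, trace, diag_apply,
    mul_apply, conjTranspose_apply]
  rw [Finset.sum_comm]
  simp only [RCLike.star_def, mul_comm]
  rfl

open WithLp in
theorem frobNorm_eq_norm_toLp {P : ℕ} (X : Matrix (Fin P) (Fin P) ℂ) :
    frobNorm X = ‖toLp 2 (Function.uncurry X)‖ := by
  rw [frobNorm, EuclideanSpace.norm_eq, Fintype.sum_prod_type]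
  rfl

theorem frobNorm_le_of_trace_mul_sub_eq_zero {P : ℕ} {A B : Matrix (Fin P) (Fin P) ℂ}
    (hA : A.IsHermitian) (h : (A * (A - B)).trace = 0) : frobNorm A ≤ frobNorm B := by
  rw [frobNorm_eq_norm_toLp, frobNorm_eq_norm_toLp]
  apply norm_le_norm_of_inner_sub_eq_zero (𝕜 := ℂ)
  refine (Matrix.inner_toLp_uncurry A (A - B)).trans ?_
  rwa [hA.eq]

theorem Matrix.trace_conj_mul_conj {n R : Type*} [Fintype n] [CommSemiring R] (S X Y : Matrix n n R) :
    ((S * X * S) * (S * Y * S)).trace = (X * ((S * S) * Y * (S * S))).trace := by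
  rw [show S * X * S * (S * Y * S) = S * (X * (S * S * Y * S)) by simp only [Matrix.mul_assoc],
    trace_mul_comm, Matrix.mul_assoc, Matrix.mul_assoc _ S S]

theorem trace_outer_mul {P : ℕ} (v : Fin P → ℂ) (M : Matrix (Fin P) (Fin P) ℂ) :
    (outer v * M).trace = star v ⬝ᵥ (M *ᵥ v) := by
  rw [show outer v = vecMulVec v (star v) from rfl, vecMulVec_mul, trace_vecMulVec,
    dotProduct_comm, dotProduct_mulVec]

theorem trace_sum_smul_outer_mul_eq_zero {P : ℕ} {ι : Type*} [Fintype ι] (v : ι → Fin P → ℂ)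
    (c : ι → ℂ) {M : Matrix (Fin P) (Fin P) ℂ} (hM : ∀ k, star (v k) ⬝ᵥ (M *ᵥ v k) = 0) :
    ((∑ k, c k • outer (v k)) * M).trace = 0 := by
  simp only [Finset.sum_mul, trace_sum, smul_mul, trace_smul, trace_outer_mul, hM, smul_zero,
    Finset.sum_const_zero]

theorem stmt_3_general (P K : ℕ)
    (v : Fin K → Fin P → ℂ)
    (C : Matrix (Fin P) (Fin P) ℂ) (hCpd : C.PosDef)
    (Δ : Matrix (Fin P) (Fin P) ℂ)
    (Γ : Matrix (Fin P) (Fin P) ℂ) (hΓherm : Γ.IsHermitian)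
    (hΓspan : ∃ c : Fin K → ℝ, Γ = ∑ k, (c k : ℂ) • outer (v k))
    (horth : ∀ k, star (v k) ⬝ᵥ ((C⁻¹ * (Γ - Δ) * C⁻¹) *ᵥ v k) = 0) :
    frobNorm ((hCpd.posSemidef.sqrt)⁻¹ * Γ * (hCpd.posSemidef.sqrt)⁻¹) ≤
      frobNorm ((hCpd.posSemidef.sqrt)⁻¹ * Δ * (hCpd.posSemidef.sqrt)⁻¹) := by
  obtain ⟨c, hΓ⟩ := hΓspan
  set S := (hCpd.posSemidef.sqrt)⁻¹
  have hS : S.IsHermitian := hCpd.posSemidef.isHermitian_sqrt.inv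
  have hSS : S * S = C⁻¹ := by rw [← Matrix.mul_inv_rev, hCpd.posSemidef.sqrt_mul_self]
  have hSΓS : (S * Γ * S).IsHermitian := by
    simpa only [hS.eq] using isHermitian_conjTranspose_mul_mul S hΓherm
  refine frobNorm_le_of_trace_mul_sub_eq_zero hSΓS ?_
  rw [← Matrix.sub_mul, ← Matrix.mul_sub, trace_conj_mul_conj, hSS]
  simpa only [← hΓ] using trace_sum_smul_outer_mul_eq_zero v (fun k => (c k : ℂ)) horth

/-- If `Γ` is Hermitian, lies in the real span of `{v_k v_kᴴ}`, and
`v_kᴴ C⁻¹ (Γ − Δ) C⁻¹ v_k = 0` for all `k`, then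
`‖C^{-1/2} Γ C^{-1/2}‖_F ≤ ‖C^{-1/2} Δ C^{-1/2}‖_F`. -/
theorem stmt_3 (P K : ℕ) (hP : 0 < P) (hK : 0 < K)
    (v : Fin K → Fin P → ℂ)
    (C : Matrix (Fin P) (Fin P) ℂ) (hCpd : C.PosDef)
    (Δ : Matrix (Fin P) (Fin P) ℂ) (hΔherm : Δ.IsHermitian)
    (Γ : Matrix (Fin P) (Fin P) ℂ) (hΓherm : Γ.IsHermitian)
    (hΓspan : ∃ c : Fin K → ℝ, Γ = ∑ k, (c k : ℂ) • outer (v k))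
    (horth : ∀ k, star (v k) ⬝ᵥ ((C⁻¹ * (Γ - Δ) * C⁻¹) *ᵥ v k) = 0) :
    frobNorm ((hCpd.posSemidef.sqrt)⁻¹ * Γ * (hCpd.posSemidef.sqrt)⁻¹) ≤
      frobNorm ((hCpd.posSemidef.sqrt)⁻¹ * Δ * (hCpd.posSemidef.sqrt)⁻¹) :=
  stmt_3_general P K v C hCpd Δ Γ hΓherm hΓspan horth
end
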